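/- arXiv:2309.11459 — 4 statements merged into one kernel-verified Lean document; each statement's English description precedes it below -/
import Mathlib

section
/- The series of harmonic numbers over cubes satisfies ∑_{k=1}^∞ H_k / k³ = π⁴/72. -/
/-!
Write `ζ(2)² = ∑_{a,b ≥ 1} 1/(a²b²)` and split each term with the partial fraction
`1/(ab) = (1/a + 1/b)/(a+b)`:
`1/(a²b²) = 1/(a²(a+b)²) + 1/(b²(a+b)²) + 2/(a(a+b)³) + 2/(b(a+b)³)`.
Grouping by `n = a + b`, each of the first two families sums to
`∑ₙ (∑_{a<n} 1/a²)/n² = (ζ(2)² - ζ(4))/2`, and each of the last two to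
`∑ₙ H_{n-1}/n³ = S - ζ(4)`.
Hence `ζ(2)² = ζ(2)² - ζ(4) + 4(S - ζ(4))`, i.e. `S = 5ζ(4)/4 = π⁴/72`.
-/

open Finset Real

lemma HasSum.of_sum_antidiagonal {A : Type*} [AddMonoid A] [HasAntidiagonal A]
    {f : A × A → ℝ} (hf : 0 ≤ f) {L : ℝ}
    (h : HasSum (fun n => ∑ p ∈ antidiagonal n, f p) L) : HasSum f L := by
  rw [← (HasAntidiagonal.sigmaAntidiagonalEquivProd (A := A)).hasSum_iff]
  have hfiber (n : A) : HasSum (fun p : antidiagonal n => f p) (∑ p ∈ antidiagonal n, f p) :=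
    (antidiagonal n).hasSum f
  obtain ⟨S, hS⟩ : Summable (f ∘ HasAntidiagonal.sigmaAntidiagonalEquivProd) :=
    (summable_sigma_of_nonneg fun _ => hf _).2
      ⟨fun n => (hfiber n).summable, h.summable.congr fun n => (hfiber n).tsum_eq.symm⟩
  rwa [(hS.sigma hfiber).unique h] at hS

lemma HasSum.prod_mul_add_succ_of_sum_range_mul {a c : ℕ → ℝ} (ha : 0 ≤ a) (hc : 0 ≤ c)
    {L : ℝ} (h : HasSum (fun n => (∑ i ∈ range n, a i) * c n) L) :
    HasSum (fun p : ℕ × ℕ => a p.1 * c (p.1 + p.2 + 1)) L := by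
  refine .of_sum_antidiagonal (fun p => mul_nonneg (ha _) (hc _)) ?_
  rw [← hasSum_nat_add_iff' 1] at h
  simp only [range_one, sum_singleton, range_zero, sum_empty, zero_mul, sub_zero] at h
  refine h.congr_fun fun n => ?_
  rw [Nat.sum_antidiagonal_eq_sum_range_succ_mk, sum_mul]
  exact sum_congr rfl fun i hi => by
    rw [Nat.add_sub_cancel' (by simpa [Nat.lt_succ_iff] using hi)]

lemma HasSum.sum_range_mul_self {a : ℕ → ℝ} (ha : 0 ≤ a) {s t : ℝ} (hs : HasSum a s)
    (ht : HasSum (fun n => a n ^ 2) t) :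
    HasSum (fun n => (∑ i ∈ range n, a i) * a n) ((s ^ 2 - t) / 2) := by
  have htelescope : HasSum
      (fun n => (∑ i ∈ range (n + 1), a i) ^ 2 - (∑ i ∈ range n, a i) ^ 2) (s ^ 2) := by
    refine (hasSum_iff_tendsto_nat_of_nonneg (fun n => ?_) _).2 ?_
    · rw [sub_nonneg, sum_range_succ]
      exact pow_le_pow_left₀ (sum_nonneg fun i _ => ha i) (le_add_of_nonneg_right (ha n)) 2
    · simpa only [sum_range_sub (fun n => (∑ i ∈ range n, a i) ^ 2), range_zero, sum_empty,
        ne_eq, OfNat.ofNat_ne_zero, not_false_eq_true, zero_pow, sub_zero]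
        using hs.tendsto_sum_nat.pow 2
  refine ((htelescope.sub ht).div_const 2).congr_fun fun n => ?_
  rw [sum_range_succ]
  ring

lemma hasSum_one_div_nat_add_one_pow {k : ℕ} (hk : k ≠ 0) {s : ℝ}
    (h : HasSum (fun n : ℕ => 1 / (n : ℝ) ^ k) s) :
    HasSum (fun n : ℕ => 1 / ((n : ℝ) + 1) ^ k) s := by
  rw [← hasSum_nat_add_iff' 1] at h
  simpa [hk] using h

lemma harmonic_eq_sum_range (n : ℕ) :
    (harmonic n : ℝ) = ∑ i ∈ range n, 1 / ((i : ℝ) + 1) := by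
  simp [harmonic]

lemma harmonic_le_self (n : ℕ) : (harmonic n : ℝ) ≤ n := by
  rw [harmonic_eq_sum_range]
  simpa using sum_le_card_nsmul (range n) (fun i : ℕ => 1 / ((i : ℝ) + 1)) 1 fun i _ =>
    div_le_one_of_le₀ (by simp) (by positivity)

lemma summable_harmonic_succ_div_pow_three :
    Summable fun k : ℕ => (harmonic (k + 1) : ℝ) / ((k : ℝ) + 1) ^ 3 := by
  have hH (k : ℕ) : (0 : ℝ) ≤ harmonic (k + 1) := mod_cast (harmonic_pos k.succ_ne_zero).le
  refine .of_nonneg_of_le (fun k => div_nonneg (hH k) (by positivity)) (fun k => ?_)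
    (hasSum_one_div_nat_add_one_pow two_ne_zero hasSum_zeta_two).summable
  calc (harmonic (k + 1) : ℝ) / ((k : ℝ) + 1) ^ 3
      ≤ ((k : ℝ) + 1) / ((k : ℝ) + 1) ^ 3 := by
        gcongr; exact_mod_cast harmonic_le_self (k + 1)
    _ = 1 / ((k : ℝ) + 1) ^ 2 := by field_simp

lemma HasSum.harmonic_mul_one_div_pow_three {S : ℝ}
    (hS : HasSum (fun k : ℕ => (harmonic (k + 1) : ℝ) / ((k : ℝ) + 1) ^ 3) S) :
    HasSum (fun n : ℕ => (harmonic n : ℝ) * (1 / ((n : ℝ) + 1) ^ 3)) (S - π ^ 4 / 90) := by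
  refine (hS.sub (hasSum_one_div_nat_add_one_pow four_ne_zero hasSum_zeta_four)).congr_fun
    fun n => ?_
  have hn : (n : ℝ) + 1 ≠ 0 := by positivity
  simp only [harmonic_succ, Rat.cast_add, Rat.cast_inv, Rat.cast_natCast, Nat.cast_succ]
  field_simp
  ring

lemma one_div_sq_mul_one_div_sq_eq {a b : ℝ} (ha : a ≠ 0) (hb : b ≠ 0) (hab : a + b ≠ 0) :
    1 / a ^ 2 * (1 / b ^ 2) = 1 / a ^ 2 * (1 / (a + b) ^ 2) + 1 / b ^ 2 * (1 / (b + a) ^ 2)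
      + 2 * (1 / a * (1 / (a + b) ^ 3) + 1 / b * (1 / (b + a) ^ 3)) := by
  rw [add_comm b a]
  field_simp
  ring

/-- The series of harmonic numbers over cubes: `∑_{k=1}^∞ H_k / k³ = π⁴/72`. -/
theorem stmt_0 :
    ∑' k : ℕ, (harmonic (k + 1) : ℝ) / ((k : ℝ) + 1) ^ 3 = Real.pi ^ 4 / 72 := by
  obtain ⟨S, hS⟩ := summable_harmonic_succ_div_pow_three
  have hζ2 := hasSum_one_div_nat_add_one_pow two_ne_zero hasSum_zeta_two
  have hζ4 : HasSum (fun n : ℕ => (1 / ((n : ℝ) + 1) ^ 2) ^ 2) (π ^ 4 / 90) := by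
    simpa [div_pow, ← pow_mul] using hasSum_one_div_nat_add_one_pow four_ne_zero hasSum_zeta_four
  have hsq := hζ2.mul hζ2 <|
    hζ2.summable.mul_of_nonneg hζ2.summable (fun n => by positivity) (fun n => by positivity)
  have hA := (hζ2.sum_range_mul_self (fun _ => by positivity) hζ4)
    |>.prod_mul_add_succ_of_sum_range_mul (fun _ => by positivity) (fun _ => by positivity)
  have hH := hS.harmonic_mul_one_div_pow_three.congr_fun fun n => by rw [harmonic_eq_sum_range]
  have hB := hH.prod_mul_add_succ_of_sum_range_mul (fun _ => by positivity) (fun _ => by positivity)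
  have hAswap := (Equiv.prodComm ℕ ℕ).hasSum_iff.2 hA
  have hBswap := (Equiv.prodComm ℕ ℕ).hasSum_iff.2 hB
  have key := hsq.unique (((hA.add hAswap).add ((hB.add hBswap).mul_left 2)).congr_fun fun p => by
    simp only [Function.comp_apply, Equiv.prodComm_apply, Prod.fst_swap, Prod.snd_swap]
    rw [one_div_sq_mul_one_div_sq_eq (a := (p.1 : ℝ) + 1) (b := (p.2 : ℝ) + 1)
      (by positivity) (by positivity) (by positivity)]
    push_cast
    ring)
  rw [hS.tsum_eq]
  linarith
end

section
/- The series ∑_{k=1}^∞ H_k / (2k-1)³ equals -π²/4 + π⁴/64 + 2·ln 2 + (7/4)·ζ(3) - (7/4)·ln 2 · ζ(3). -/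
/-!
Split `H_{k+1} = H_k + 1/(k+1)`. With `λ(s) = ∑ 1/(2k+1)^s = (1 - 2^{-s}) ζ(s)`, partial fractions
turn `∑ 1/((k+1)(2k+1)³)` into `2λ(3) - 2λ(2) + 2 log 2`, the last term coming from
`∑ (1/(2k+1) - 1/(2k+2)) = log 2`.

The other part, `∑ H_n/(2n+1)³`, is the double sum of `1/((j+1)(2n+1)³)` over `j < n`. Writing
`n = m + j + 1`, `x = j + 1`, `d = 2m + 1`, the decomposition
`1/(x(2x+d)³) = 2/d³ (1/(2x) - 1/(2x+d)) - 2/(d²(2x+d)²) - 2/(d(2x+d)³)`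
splits it into three absolutely convergent double sums. In the first, the sum over `j` telescopes
to `O_{m+1} - log 2` with `O_n = ∑_{i<n} 1/(2i+1)`; the second runs over pairs of odd numbers
`d < e` and equals `(λ(2)² - λ(4))/2`; the third is `∑ O_n/(2n+1)³`, which cancels the first up to
`λ(4)`. So `∑ H_n/(2n+1)³ = 3λ(4) - λ(2)² - 2 log 2 · λ(3)`, and `λ(2) = π²/8`, `λ(3) = 7ζ(3)/8`,
`λ(4) = π⁴/96` conclude.
-/

open Real Filter Finset Topology

section Triangle

variable {α : Type*} [TopologicalSpace α] [RegularSpace α]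

theorem HasSum.sum_antidiagonal [AddCommMonoid α] [ContinuousAdd α] {f : ℕ × ℕ → α} {a : α}
    (hf : HasSum f a) :
    HasSum (fun n ↦ ∑ p ∈ antidiagonal n, f p) a := by
  have h := (HasAntidiagonal.sigmaAntidiagonalEquivProd.hasSum_iff.mpr hf).sigma
    fun n ↦ hasSum_fintype _
  simpa [HasAntidiagonal.sigmaAntidiagonalEquivProd, Finset.sum_attach] using h

variable [AddCommGroup α] [IsTopologicalAddGroup α]

theorem HasSum.sum_range_of_prod {g : ℕ → ℕ → α} {a : α}
    (hg : HasSum (fun p : ℕ × ℕ ↦ g p.1 (p.1 + p.2 + 1)) a) :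
    HasSum (fun n ↦ ∑ i ∈ range n, g i n) a := by
  have hrow (k : ℕ) :
      ∑ p ∈ antidiagonal k, g p.1 (p.1 + p.2 + 1) = ∑ i ∈ range (k + 1), g i (k + 1) := by
    rw [Finset.Nat.sum_antidiagonal_eq_sum_range_succ_mk]
    exact sum_congr rfl fun i hi ↦ by
      rw [Nat.add_sub_cancel' (by simpa [Nat.lt_succ_iff] using hi)]
  have h := hg.sum_antidiagonal
  simp only [hrow] at h
  rw [← hasSum_nat_add_iff' 1]
  simpa only [range_one, sum_singleton, range_zero, sum_empty, sub_zero] using h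

theorem HasSum.sum_range_of_prod_swap {g : ℕ → ℕ → α} {a : α}
    (hg : HasSum (fun p : ℕ × ℕ ↦ g p.2 (p.1 + p.2 + 1)) a) :
    HasSum (fun n ↦ ∑ i ∈ range n, g i n) a := by
  refine HasSum.sum_range_of_prod ?_
  rw [← (Equiv.prodComm ℕ ℕ).hasSum_iff]
  simpa only [Function.comp_def, Equiv.prodComm_apply, Prod.fst_swap, Prod.snd_swap,
    add_comm _ (Prod.fst _)] using hg

end Triangle

theorem tsum_sum_range_mul_of_nonneg {x : ℕ → ℝ} (hx0 : ∀ i, 0 ≤ x i) (hx : Summable x) :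
    ∑' n, (∑ i ∈ range n, x i) * x n = ((∑' i, x i) ^ 2 - ∑' i, x i ^ 2) / 2 := by
  have hsq : Summable (x · ^ 2) :=
    (hx.mul_left (∑' i, x i)).of_nonneg_of_le (fun i ↦ sq_nonneg _) fun i ↦ by
      rw [sq]
      exact mul_le_mul_of_nonneg_right (hx.le_tsum i fun j _ ↦ hx0 j) (hx0 i)
  have hinj : Function.Injective fun p : ℕ × ℕ ↦ (p.1, p.1 + p.2 + 1) := fun p q h ↦ by
    simp only [Prod.mk.injEq] at h
    ext <;> omega
  have hpair : Summable fun p : ℕ × ℕ ↦ x p.1 * x (p.1 + p.2 + 1) :=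
    (hx.mul_of_nonneg hx hx0 hx0).comp_injective hinj
  have hlower := HasSum.sum_range_of_prod (g := fun i n ↦ x i * x n) hpair.hasSum
  simp only [← sum_mul] at hlower
  have hrow (i : ℕ) : ∑' m, x i * x (i + m + 1)
      = (∑' i, x i) * x i - (∑ t ∈ range i, x t) * x i - x i ^ 2 := by
    rw [tsum_mul_left, ← hx.sum_add_tsum_nat_add (i + 1), sum_range_succ]
    have hshift : ∑' m, x (i + m + 1) = ∑' m, x (m + (i + 1)) :=
      tsum_congr fun m ↦ by rw [add_comm i m, add_assoc]
    rw [hshift]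
    ring
  have hupper := ((hx.hasSum.mul_left (∑' i, x i)).sub hlower).sub hsq.hasSum
  have hfib : ∑' p : ℕ × ℕ, x p.1 * x (p.1 + p.2 + 1)
      = ∑' i, ((∑' i, x i) * x i - (∑ t ∈ range i, x t) * x i - x i ^ 2) := by
    rw [hpair.tsum_prod, tsum_congr hrow]
  rw [hlower.tsum_eq]
  linarith [hupper.tsum_eq]

theorem Antitone.hasSum_sub_add_of_tendsto_zero {g : ℕ → ℝ} (hg : Antitone g)
    (hlim : Tendsto g atTop (𝓝 0)) (m : ℕ) :
    HasSum (fun j ↦ g j - g (j + m)) (∑ i ∈ range m, g i) := by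
  rw [hasSum_iff_tendsto_nat_of_nonneg fun j ↦ sub_nonneg.2 (hg (Nat.le_add_right j m))]
  have hpartial (N : ℕ) : ∑ j ∈ range N, (g j - g (j + m))
      = ∑ i ∈ range m, g i - ∑ i ∈ range m, g (N + i) := by
    have h₁ := sum_range_add g N m
    have h₂ := sum_range_add g m N
    rw [add_comm m N] at h₂
    simp only [sum_sub_distrib, add_comm _ m]
    linarith
  simp only [hpartial]
  simpa using tendsto_const_nhds.sub
    (tendsto_finsetSum (range m) fun i _ ↦ hlim.comp (tendsto_add_atTop_nat i))

theorem tendsto_harmonic_two_mul_sub_harmonic :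
    Tendsto (fun n : ℕ ↦ (harmonic (2 * n) : ℝ) - harmonic n) atTop (𝓝 (log 2)) := by
  have h := ((tendsto_harmonic_sub_log.comp (tendsto_id.const_mul_atTop' two_pos)).sub
    tendsto_harmonic_sub_log).const_add (log 2)
  rw [sub_self, add_zero] at h
  refine h.congr' ?_
  filter_upwards [eventually_ne_atTop 0] with n hn
  simp only [Function.comp_apply, id, Nat.cast_mul, Nat.cast_ofNat]
  rw [log_mul two_ne_zero (by exact_mod_cast hn)]
  ring

theorem hasSum_alternating_harmonic_pairs :
    HasSum (fun k : ℕ ↦ 1 / (2 * (k : ℝ) + 1) - 1 / (2 * k + 2)) (log 2) := by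
  have hpartial (n : ℕ) : ∑ k ∈ range n, (1 / (2 * (k : ℝ) + 1) - 1 / (2 * k + 2))
      = harmonic (2 * n) - harmonic n := by
    induction n with
    | zero => simp
    | succ n ih =>
      rw [sum_range_succ, ih, mul_add_one, harmonic_succ, harmonic_succ, harmonic_succ]
      push_cast
      field_simp
      ring
  rw [hasSum_iff_tendsto_nat_of_nonneg fun k ↦ sub_nonneg.2 (by gcongr; linarith)]
  simpa only [hpartial] using tendsto_harmonic_two_mul_sub_harmonic

lemma tsum_one_div_nat_pow_eq_tsum_one_div_nat_add_one_pow {s : ℕ} (hs : 1 < s) :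
    ∑' n : ℕ, 1 / (n : ℝ) ^ s = ∑' n : ℕ, 1 / ((n : ℝ) + 1) ^ s := by
  rw [(summable_one_div_nat_pow.2 hs).tsum_eq_zero_add]
  simp [zero_pow (by omega : s ≠ 0)]

noncomputable def oddInv (k : ℕ) : ℝ := 1 / (2 * k + 1)

lemma oddInv_pos (k : ℕ) : 0 < oddInv k := by unfold oddInv; positivity

lemma oddInv_antitone : Antitone oddInv := fun a b hab ↦ by
  unfold oddInv
  gcongr

lemma tendsto_oddInv : Tendsto oddInv atTop (𝓝 0) := by
  refine squeeze_zero (fun k ↦ (oddInv_pos k).le) (fun k ↦ ?_)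
    tendsto_one_div_add_atTop_nhds_zero_nat
  unfold oddInv
  gcongr
  linarith [k.cast_nonneg (α := ℝ)]

lemma oddInv_add_add_one_le_left (m j : ℕ) : oddInv (m + j + 1) ≤ oddInv m :=
  oddInv_antitone (by omega)

lemma oddInv_add_add_one_le_right (m j : ℕ) : oddInv (m + j + 1) ≤ oddInv j :=
  oddInv_antitone (by omega)

lemma oddInv_pow (s k : ℕ) : oddInv k ^ s = 1 / ((2 * k + 1 : ℕ) : ℝ) ^ s := by
  simp [oddInv]

lemma summable_oddInv_pow {s : ℕ} (hs : 1 < s) : Summable (oddInv · ^ s) := by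
  simp only [oddInv_pow]
  exact (summable_one_div_nat_pow.2 hs).comp_injective fun a b h ↦ by omega

lemma tsum_oddInv_pow {s : ℕ} (hs : 1 < s) :
    ∑' k, oddInv k ^ s = (1 - 1 / 2 ^ s) * ∑' n : ℕ, 1 / (n : ℝ) ^ s := by
  have hζ : Summable fun n : ℕ ↦ 1 / (n : ℝ) ^ s := summable_one_div_nat_pow.2 hs
  have heven (k : ℕ) : 1 / ((2 * k : ℕ) : ℝ) ^ s = 1 / 2 ^ s * (1 / (k : ℝ) ^ s) := by
    push_cast
    rw [mul_pow, one_div_mul_one_div]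
  have h := tsum_even_add_odd (f := fun n : ℕ ↦ 1 / (n : ℝ) ^ s)
    (by simpa only [heven] using hζ.mul_left _)
    (by simpa only [oddInv_pow] using summable_oddInv_pow hs)
  simp only [heven, tsum_mul_left, ← oddInv_pow] at h
  linarith

lemma hasSum_inv_two_mul_add_two_sub_oddInv (m : ℕ) :
    HasSum (fun j : ℕ ↦ 1 / (2 * (j : ℝ) + 2) - oddInv (m + j + 1))
      (∑ i ∈ range (m + 1), oddInv i - log 2) := by
  have h := (oddInv_antitone.hasSum_sub_add_of_tendsto_zero tendsto_oddInv (m + 1)).sub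
    hasSum_alternating_harmonic_pairs
  have hterm (j : ℕ) :
      oddInv j - oddInv (j + (m + 1)) - (1 / (2 * (j : ℝ) + 1) - 1 / (2 * j + 2))
        = 1 / (2 * (j : ℝ) + 2) - oddInv (m + j + 1) := by
    rw [show m + j + 1 = j + (m + 1) by ring]
    unfold oddInv
    ring
  simpa only [hterm] using h

lemma oddInv_pow_three_div_succ_eq (m j : ℕ) :
    oddInv (m + j + 1) ^ 3 / (j + 1)
      = 2 * (oddInv m ^ 3 * (1 / (2 * j + 2) - oddInv (m + j + 1)))
        - 2 * (oddInv m ^ 2 * oddInv (m + j + 1) ^ 2)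
        - 2 * (oddInv m * oddInv (m + j + 1) ^ 3) := by
  unfold oddInv
  push_cast
  field_simp
  ring

lemma summable_oddInv_sq_mul_oddInv_sq :
    Summable fun p : ℕ × ℕ ↦ oddInv p.1 ^ 2 * oddInv p.2 ^ 2 :=
  (summable_oddInv_pow one_lt_two).mul_of_nonneg (summable_oddInv_pow one_lt_two)
    (fun k ↦ (pow_pos (oddInv_pos k) 2).le) (fun k ↦ (pow_pos (oddInv_pos k) 2).le)

lemma summable_oddInv_mul_oddInv_add_add_one_pow_three :
    Summable fun p : ℕ × ℕ ↦ oddInv p.1 * oddInv (p.1 + p.2 + 1) ^ 3 := by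
  refine summable_oddInv_sq_mul_oddInv_sq.of_nonneg_of_le
    (fun p ↦ mul_nonneg (oddInv_pos _).le (pow_pos (oddInv_pos _) 3).le) (fun p ↦ ?_)
  calc oddInv p.1 * oddInv (p.1 + p.2 + 1) ^ 3
      = oddInv p.1 * oddInv (p.1 + p.2 + 1) * oddInv (p.1 + p.2 + 1) ^ 2 := by ring
    _ ≤ oddInv p.1 * oddInv p.1 * oddInv p.2 ^ 2 := by
      have := (oddInv_pos p.1).le
      have := (oddInv_pos (p.1 + p.2 + 1)).le
      gcongr
      · exact oddInv_add_add_one_le_left _ _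
      · exact oddInv_add_add_one_le_right _ _
    _ = oddInv p.1 ^ 2 * oddInv p.2 ^ 2 := by ring

lemma summable_oddInv_add_add_one_pow_three_div_succ :
    Summable fun p : ℕ × ℕ ↦ oddInv (p.1 + p.2 + 1) ^ 3 / (p.2 + 1) := by
  refine (summable_oddInv_sq_mul_oddInv_sq.mul_left 2).of_nonneg_of_le
    (fun p ↦ div_nonneg (pow_pos (oddInv_pos _) 3).le (by positivity)) (fun p ↦ ?_)
  have hsucc : 1 / ((p.2 : ℝ) + 1) ≤ 2 * oddInv p.2 := by
    unfold oddInv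
    rw [mul_one_div, div_le_div_iff₀ (by positivity) (by positivity)]
    linarith
  calc oddInv (p.1 + p.2 + 1) ^ 3 / (p.2 + 1)
      = 1 / ((p.2 : ℝ) + 1) * oddInv (p.1 + p.2 + 1) * oddInv (p.1 + p.2 + 1) ^ 2 := by ring
    _ ≤ 2 * oddInv p.2 * oddInv p.2 * oddInv p.1 ^ 2 := by
      have := (oddInv_pos p.2).le
      have := (oddInv_pos (p.1 + p.2 + 1)).le
      gcongr
      · exact oddInv_add_add_one_le_right _ _
      · exact oddInv_add_add_one_le_left _ _
    _ = 2 * (oddInv p.1 ^ 2 * oddInv p.2 ^ 2) := by ring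

lemma hasSum_oddInv_sq_mul_oddInv_add_add_one_sq :
    HasSum (fun p : ℕ × ℕ ↦ oddInv p.1 ^ 2 * oddInv (p.1 + p.2 + 1) ^ 2)
      (((∑' k, oddInv k ^ 2) ^ 2 - ∑' k, oddInv k ^ 4) / 2) := by
  have hs : Summable fun p : ℕ × ℕ ↦ oddInv p.1 ^ 2 * oddInv (p.1 + p.2 + 1) ^ 2 := by
    refine summable_oddInv_sq_mul_oddInv_sq.of_nonneg_of_le (fun p ↦ ?_) (fun p ↦ ?_)
    · exact mul_nonneg (pow_pos (oddInv_pos _) 2).le (pow_pos (oddInv_pos _) 2).le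
    · gcongr
      · exact (oddInv_pos _).le
      · exact oddInv_add_add_one_le_right _ _
  have h := HasSum.sum_range_of_prod (g := fun i n ↦ oddInv i ^ 2 * oddInv n ^ 2) hs.hasSum
  simp only [← sum_mul] at h
  convert hs.hasSum using 1
  rw [← h.tsum_eq, tsum_sum_range_mul_of_nonneg (fun k ↦ (pow_pos (oddInv_pos k) 2).le)
    (summable_oddInv_pow one_lt_two)]
  simp only [← pow_mul]

theorem hasSum_harmonic_mul_oddInv_pow_three :
    HasSum (fun n ↦ (harmonic n : ℝ) * oddInv n ^ 3)
      (3 * ∑' k, oddInv k ^ 4 - (∑' k, oddInv k ^ 2) ^ 2 - 2 * log 2 * ∑' k, oddInv k ^ 3) := by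
  have hb := hasSum_oddInv_sq_mul_oddInv_add_add_one_sq
  have hc := summable_oddInv_mul_oddInv_add_add_one_pow_three.hasSum
  have ht := summable_oddInv_add_add_one_pow_three_div_succ
  have ha : Summable fun p : ℕ × ℕ ↦
      oddInv p.1 ^ 3 * (1 / (2 * (p.2 : ℝ) + 2) - oddInv (p.1 + p.2 + 1)) := by
    refine (((ht.add (hb.summable.mul_left 2)).add (hc.summable.mul_left 2)).div_const 2).congr
      fun p ↦ ?_
    rw [oddInv_pow_three_div_succ_eq]
    ring
  have hW := HasSum.sum_range_of_prod (g := fun i n ↦ oddInv i * oddInv n ^ 3) hc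
  simp only [← sum_mul] at hW
  have ha_eval :
      ∑' p : ℕ × ℕ, oddInv p.1 ^ 3 * (1 / (2 * (p.2 : ℝ) + 2) - oddInv (p.1 + p.2 + 1))
        = ∑' p : ℕ × ℕ, oddInv p.1 * oddInv (p.1 + p.2 + 1) ^ 3 + ∑' k, oddInv k ^ 4
        - log 2 * ∑' k, oddInv k ^ 3 := by
    have hrow (m : ℕ) : ∑' j : ℕ, oddInv m ^ 3 * (1 / (2 * (j : ℝ) + 2) - oddInv (m + j + 1))
        = (∑ i ∈ range m, oddInv i) * oddInv m ^ 3 + oddInv m ^ 4 - log 2 * oddInv m ^ 3 := by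
      rw [tsum_mul_left, (hasSum_inv_two_mul_add_two_sub_oddInv m).tsum_eq, sum_range_succ]
      ring
    rw [ha.tsum_prod, tsum_congr hrow]
    exact ((hW.add (summable_oddInv_pow (by norm_num)).hasSum).sub
      ((summable_oddInv_pow (by norm_num)).hasSum.mul_left (log 2))).tsum_eq
  have hpair := ((ha.hasSum.mul_left 2).sub (hb.mul_left 2)).sub (hc.mul_left 2)
  simp only [← oddInv_pow_three_div_succ_eq] at hpair
  have hlower := HasSum.sum_range_of_prod_swap (g := fun i n ↦ oddInv n ^ 3 / (i + 1)) hpair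
  have hharmonic (n : ℕ) :
      (harmonic n : ℝ) * oddInv n ^ 3 = ∑ i ∈ range n, oddInv n ^ 3 / (i + 1) := by
    simp only [harmonic, Rat.cast_sum, sum_mul]
    push_cast
    exact sum_congr rfl fun i _ ↦ by ring
  simp only [hharmonic]
  rw [hlower.summable.hasSum_iff, hlower.tsum_eq, ha_eval]
  ring

theorem hasSum_oddInv_pow_three_div_succ :
    HasSum (fun k : ℕ ↦ oddInv k ^ 3 / (k + 1))
      (2 * ∑' k, oddInv k ^ 3 - 2 * ∑' k, oddInv k ^ 2 + 2 * log 2) := by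
  have h := (((summable_oddInv_pow (by norm_num : 1 < 3)).hasSum.mul_left 2).sub
    ((summable_oddInv_pow one_lt_two).hasSum.mul_left 2)).add
    (hasSum_alternating_harmonic_pairs.mul_left 2)
  have hterm (k : ℕ) : 2 * oddInv k ^ 3 - 2 * oddInv k ^ 2
      + 2 * (1 / (2 * (k : ℝ) + 1) - 1 / (2 * k + 2)) = oddInv k ^ 3 / (k + 1) := by
    unfold oddInv
    field_simp
    ring
  simpa only [hterm] using h

/-- `∑_{k=1}^∞ H_k/(2k-1)³ = -π²/4 + π⁴/64 + 2 ln 2 + (7/4)ζ(3) - (7/4) ln 2 · ζ(3)`. -/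
theorem stmt_1 :
    ∑' k : ℕ, (harmonic (k + 1) : ℝ) / (2 * (k : ℝ) + 1) ^ 3 =
      -Real.pi ^ 2 / 4 + Real.pi ^ 4 / 64 + 2 * Real.log 2
        + (7 / 4) * (∑' n : ℕ, 1 / ((n : ℝ) + 1) ^ 3)
        - (7 / 4) * Real.log 2 * (∑' n : ℕ, 1 / ((n : ℝ) + 1) ^ 3) := by
  have hsplit (k : ℕ) : (harmonic (k + 1) : ℝ) / (2 * (k : ℝ) + 1) ^ 3
      = harmonic k * oddInv k ^ 3 + oddInv k ^ 3 / (k + 1) := by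
    rw [harmonic_succ]
    unfold oddInv
    push_cast
    field_simp
  rw [tsum_congr hsplit,
    (hasSum_harmonic_mul_oddInv_pow_three.add hasSum_oddInv_pow_three_div_succ).tsum_eq,
    tsum_oddInv_pow (by norm_num : 1 < 2), tsum_oddInv_pow (by norm_num : 1 < 3),
    tsum_oddInv_pow (by norm_num : 1 < 4), hasSum_zeta_two.tsum_eq, hasSum_zeta_four.tsum_eq,
    tsum_one_div_nat_pow_eq_tsum_one_div_nat_add_one_pow (by norm_num : 1 < 3)]
  ring
end

section
/- Let a be a complex number with |a| = 1 that is not a nonpositive real number. Then Li₄(-1/a) + Li₄(-a) = -7π⁴/360 - (π²/12)·(log a)² - (log a)⁴/24. -/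
/-!
With `θ = arg a` and `x = (θ + π) / (2π) ∈ [0, 1]` we have `-a = e^{2πix}` and `-1/a = e^{-2πix}`,
so `Li₄(-a) + Li₄(-1/a)` is the Fourier series `∑_{n ≥ 1} 2 cos(2πnx) / n⁴`, whose sum
`-(2π)⁴/4! · B₄(x)` is known through the Bernoulli polynomial `B₄`. Since `log a = iθ`, the formula
is then a polynomial identity in `θ` and `π`.
-/

/-- The polylogarithm `Li_s(z) = ∑_{k=1}^∞ z^k / k^s`. -/
noncomputable def Li (s : ℕ) (z : ℂ) : ℂ := ∑' k : ℕ, z ^ (k + 1) / ((k : ℂ) + 1) ^ s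

open Complex Set
open scoped Real Nat

theorem bernoulliFun_four (x : ℝ) : bernoulliFun 4 x = x ^ 4 - 2 * x ^ 3 + x ^ 2 - 30⁻¹ := by
  norm_num [bernoulliFun, Polynomial.bernoulli_def, Finset.sum_range_succ,
    bernoulli_eq_bernoulli'_of_ne_one, bernoulli'_three, bernoulli'_four, Nat.choose]
  ring

theorem neg_two_pi_pow_four_mul_bernoulliFun_four (θ : ℝ) :
    -(2 * π) ^ 4 / 24 * bernoulliFun 4 ((θ + π) / (2 * π)) =
      -7 * π ^ 4 / 360 + π ^ 2 / 12 * θ ^ 2 - θ ^ 4 / 24 := by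
  rw [bernoulliFun_four]
  field_simp
  ring

theorem hasSum_Li {s : ℕ} (hs : 2 ≤ s) {z : ℂ} (hz : ‖z‖ ≤ 1) :
    HasSum (fun k : ℕ => z ^ (k + 1) / ((k : ℂ) + 1) ^ s) (Li s z) := by
  refine (Summable.of_norm_bounded (g := fun k : ℕ => 1 / ((k : ℝ) + 1) ^ s) ?_ fun k => ?_).hasSum
  · exact_mod_cast (summable_nat_add_iff 1).mpr
      (Real.summable_one_div_nat_pow.mpr (by omega : 1 < s))
  · rw [norm_div, norm_pow, norm_pow]
    gcongr
    · exact pow_le_one₀ (norm_nonneg z) hz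
    · exact_mod_cast (Complex.norm_natCast (k + 1)).ge

theorem Li_exp_add_neg_one_pow_mul_Li_exp_neg {k : ℕ} (hk : 2 ≤ k) {x : ℝ} (hx : x ∈ Icc 0 1) :
    Li k (exp (2 * π * I * x)) + (-1) ^ k * Li k (exp (-(2 * π * I * x))) =
      -(2 * π * I) ^ k / k ! * bernoulliFun k x := by
  have hnorm (y : ℝ) : ‖exp (2 * π * I * y)‖ ≤ 1 := by simp [Complex.norm_exp]
  have hfourier (n : ℤ) : fourier n (x : UnitAddCircle) = exp (n * (2 * π * I * x)) := by
    rw [fourier_coe_apply]; congr 1; push_cast; ring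
  -- the `n = 0` term of the Fourier series is `1 / 0 * _ = 0`
  have hsum := (hasSum_nat_add_iff' 1).mpr (hasSum_one_div_nat_pow_mul_fourier hk hx)
  simp only [Finset.range_one, Finset.sum_singleton, CharP.cast_eq_zero,
    zero_pow (by omega : k ≠ 0), div_zero, zero_mul, sub_zero] at hsum
  have hLi := (hasSum_Li hk (hnorm x)).add
    ((hasSum_Li hk (by simpa using hnorm (-x))).mul_left ((-1) ^ k))
  refine hLi.unique (hsum.congr_fun fun n => ?_)
  simp only [hfourier, Int.cast_neg, Int.cast_natCast, neg_mul, ← mul_neg, exp_nat_mul]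
  push_cast
  ring

theorem stmt_13_general (a : ℂ) (ha : ‖a‖ = 1) :
    Li 4 (-1 / a) + Li 4 (-a) =
      -7 * (Real.pi : ℂ) ^ 4 / 360 - ((Real.pi : ℂ) ^ 2 / 12) * Complex.log a ^ 2
        - Complex.log a ^ 4 / 24 := by
  set θ := arg a
  have hexp : exp (θ * I) = a := by simpa [ha] using norm_mul_exp_arg_mul_I a
  have hlog : log a = θ * I := by simp [Complex.log, ha, θ]
  have hx : (θ + π) / (2 * π) ∈ Icc 0 1 :=
    ⟨div_nonneg (by linarith [neg_pi_lt_arg a]) (by positivity),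
      (div_le_one (by positivity)).mpr (by linarith [arg_le_pi a])⟩
  have hneg : exp (2 * π * I * ((θ + π) / (2 * π) : ℝ)) = -a := by
    rw [show 2 * π * I * ((θ + π) / (2 * π) : ℝ) = θ * I + π * I by push_cast; field_simp,
      exp_add, hexp, exp_pi_mul_I, mul_neg_one]
  have h := Li_exp_add_neg_one_pow_mul_Li_exp_neg (k := 4) (by norm_num) hx
  rw [exp_neg, hneg, inv_neg, ← one_div, ← neg_div] at h
  have hB := congrArg ((↑) : ℝ → ℂ) (neg_two_pi_pow_four_mul_bernoulliFun_four θ)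
  push_cast at hB
  rw [hlog]
  simp only [mul_pow, I_sq, I_pow_four] at h ⊢
  norm_num [Nat.factorial] at h
  linear_combination h + hB

/-- Jonquière's inversion formula of order 4: for `|a| = 1`, `a` not a nonpositive real,
`Li₄(-1/a) + Li₄(-a) = -7π⁴/360 - (π²/12)(log a)² - (log a)⁴/24`. -/
theorem stmt_13 (a : ℂ) (ha : ‖a‖ = 1) (hs : a ∈ Complex.slitPlane) :
    Li 4 (-1 / a) + Li 4 (-a) =
      -7 * (Real.pi : ℂ) ^ 4 / 360 - ((Real.pi : ℂ) ^ 2 / 12) * Complex.log a ^ 2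
        - Complex.log a ^ 4 / 24 :=
  stmt_13_general a ha
end

section
/- Let r and s be real numbers with r > 0 and s < r, and let m be a complex number with Re(m) > 1. Then ∑_{k=1}^∞ ζ(m, (rk-s)/r) / (rk-s)^m = (1/(2 r^m)) · ( ζ(m, (r-s)/r)² + ζ(2m, (r-s)/r) ), where all complex powers of the positive real quantities rk-s and r are principal powers. -/
/-!
Put `a = (r - s) / r`, `f n = (n + a)^{-m}` and `T k = ∑_{n ≥ k} f n = ζ(m, k + a)`. Since
`r k + r - s = r (k + a)`, the `k`-th term of the series is `r^{-m} f k T k`. As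
`T k ^ 2 - T (k + 1) ^ 2 = 2 f k T k - f k ^ 2`, the sum of `2 f k T k` telescopes to
`T 0 ^ 2 + ∑ f k ^ 2 = ζ(m, a) ^ 2 + ζ(2m, a)`.
-/

/-- The Hurwitz zeta function `ζ(m, z) = ∑_{n=0}^∞ (n+z)^{-m}` for real `z > 0`,
using principal complex powers of the positive real base. -/
noncomputable def hzeta (m : ℂ) (z : ℝ) : ℂ := ∑' n : ℕ, (((n : ℝ) + z : ℝ) : ℂ) ^ (-m)

open Filter Topology

lemma norm_tsum_nat_add_le_tsum_norm {E : Type*} [SeminormedAddCommGroup E] {f : ℕ → E}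
    (hf : Summable (‖f ·‖)) (k : ℕ) :
    ‖∑' n, f (n + k)‖ ≤ ∑' n, ‖f n‖ := by
  have htail : Summable fun n => ‖f (n + k)‖ := (summable_nat_add_iff k).2 hf
  refine (norm_tsum_le_tsum_norm htail).trans ?_
  exact htail.tsum_le_tsum_of_inj (fun n => n + k) (add_left_injective k)
    (fun _ _ => norm_nonneg _) (fun _ => le_rfl) hf

section TailProducts

variable {R : Type*} [NormedCommRing R] [CompleteSpace R] {f : ℕ → R}

lemma summable_mul_tsum_nat_add (hf : Summable (‖f ·‖)) :
    Summable fun k => f k * ∑' n, f (n + k) :=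
  .of_norm_bounded (hf.mul_right (∑' n, ‖f n‖)) fun k =>
    (norm_mul_le _ _).trans <| by gcongr; exact norm_tsum_nat_add_le_tsum_norm hf k

lemma summable_sq_of_summable_norm (hf : Summable (‖f ·‖)) : Summable (f · ^ 2) :=
  .of_norm_bounded (hf.mul_right (∑' n, ‖f n‖)) fun k =>
    (norm_pow_le' _ two_pos).trans <| by
      rw [pow_two]
      gcongr
      exact hf.le_tsum k fun _ _ => norm_nonneg _

theorem two_mul_tsum_mul_tsum_nat_add (hf : Summable (‖f ·‖)) :
    2 * ∑' k, f k * ∑' n, f (n + k) = (∑' n, f n) ^ 2 + ∑' n, f n ^ 2 := by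
  set T : ℕ → R := fun k => ∑' n, f (n + k) with hT_def
  have hT_succ (k : ℕ) : T (k + 1) = T k - f k := by
    have := ((summable_nat_add_iff k).2 hf.of_norm).tsum_eq_zero_add
    simp only [hT_def, zero_add] at this ⊢
    simp only [add_right_comm _ 1 k, add_assoc] at this ⊢
    rw [this]; ring
  have hsum := (((summable_mul_tsum_nat_add hf).hasSum.mul_left 2).sub
    (summable_sq_of_summable_norm hf).hasSum).tendsto_sum_nat
  have htele : Tendsto (fun N => ∑ k ∈ Finset.range N, (2 * (f k * T k) - f k ^ 2)) atTop
      (𝓝 (T 0 ^ 2)) := by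
    have hterm (k : ℕ) : 2 * (f k * T k) - f k ^ 2 = T k ^ 2 - T (k + 1) ^ 2 := by
      rw [hT_succ]; ring
    simp only [hterm, Finset.sum_range_sub']
    simpa using tendsto_const_nhds.sub ((tendsto_sum_nat_add f).pow 2)
  have := tendsto_nhds_unique hsum htele
  simp only [hT_def, add_zero] at this
  rw [← this]; ring

end TailProducts

lemma summable_norm_cpow_nat_add {z : ℝ} (hz : 0 < z) {m : ℂ} (hm : 1 < m.re) :
    Summable fun n : ℕ => ‖(((n : ℝ) + z : ℝ) : ℂ) ^ (-m)‖ := by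
  refine ((Real.summable_one_div_nat_add_rpow z m.re).mpr hm).congr fun n => ?_
  have hpos : 0 < (n : ℝ) + z := by positivity
  rw [Complex.norm_cpow_eq_rpow_re_of_pos hpos, Complex.neg_re, Real.rpow_neg hpos.le,
    abs_of_pos hpos, one_div]

lemma hzeta_nat_add (m : ℂ) (z : ℝ) (k : ℕ) :
    hzeta m (k + z) = ∑' n : ℕ, ((((n + k : ℕ) : ℝ) + z : ℝ) : ℂ) ^ (-m) := by
  simp only [hzeta, Nat.cast_add, add_assoc]

lemma hzeta_two_mul (m : ℂ) (z : ℝ) :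
    hzeta (2 * m) z = ∑' n : ℕ, ((((n : ℝ) + z : ℝ) : ℂ) ^ (-m)) ^ 2 := by
  simp only [hzeta, ← Complex.cpow_nat_mul, neg_mul_eq_mul_neg, Nat.cast_ofNat]

lemma hzeta_div_mul_cpow {r x : ℝ} (hr : 0 < r) (hx : 0 < x) (m : ℂ) :
    hzeta m x / ((r * x : ℝ) : ℂ) ^ m = ((r : ℂ) ^ m)⁻¹ * ((x : ℂ) ^ (-m) * hzeta m x) := by
  rw [Complex.ofReal_mul, Complex.mul_cpow_ofReal_nonneg hr.le hx.le, Complex.cpow_neg,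
    div_eq_mul_inv, mul_inv]
  ring

/-- For `r > 0`, `s < r`, `Re(m) > 1`:
`∑_{k=1}^∞ ζ(m,(rk-s)/r)/(rk-s)^m = (1/(2r^m))(ζ(m,(r-s)/r)² + ζ(2m,(r-s)/r))`. -/
theorem stmt_16 (r s : ℝ) (hr : 0 < r) (hs : s < r) (m : ℂ) (hm : 1 < m.re) :
    ∑' k : ℕ, hzeta m ((r * ((k : ℝ) + 1) - s) / r) / ((r * ((k : ℝ) + 1) - s : ℝ) : ℂ) ^ m =
      1 / (2 * ((r : ℝ) : ℂ) ^ m) *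
        ((hzeta m ((r - s) / r)) ^ 2 + hzeta (2 * m) ((r - s) / r)) := by
  set a := (r - s) / r with ha_def
  have ha : 0 < a := div_pos (by linarith) hr
  have hterm (k : ℕ) :
      hzeta m ((r * ((k : ℝ) + 1) - s) / r) / ((r * ((k : ℝ) + 1) - s : ℝ) : ℂ) ^ m =
        ((r : ℂ) ^ m)⁻¹ * ((((k : ℝ) + a : ℝ) : ℂ) ^ (-m) *
          ∑' n : ℕ, ((((n + k : ℕ) : ℝ) + a : ℝ) : ℂ) ^ (-m)) := by
    have hka : (r * ((k : ℝ) + 1) - s) / r = k + a := by rw [ha_def]; field_simp; ring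
    have hrka : r * ((k : ℝ) + 1) - s = r * (k + a) := by rw [ha_def]; field_simp; ring
    rw [hka, hrka, hzeta_div_mul_cpow hr (by positivity), hzeta_nat_add]
  rw [tsum_congr hterm, tsum_mul_left, hzeta_two_mul, hzeta,
    ← two_mul_tsum_mul_tsum_nat_add (summable_norm_cpow_nat_add ha hm)]
  field_simp
end
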